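/- arXiv:2503.12219 — 2 statements merged into one kernel-verified Lean document; each statement's English description precedes it below -/
import Mathlib

section
/- Let f be a homogeneous polynomial of degree D ≥ 2 in two real variables and F(φ) = f(cos φ, sin φ). If f is hyperbolic, then for every φ the hyperbolicity inequality D²F(φ)² + D·F(φ)·F''(φ) − (D−1)·F'(φ)² < 0 holds. -/
/-!
Along the unit circle, F' and F'' are linear in the first and second partial derivatives of `f`
at `(cos φ, sin φ)`. Euler's identities for `f`, `f_x`, `f_y` (of degrees `D`, `D - 1`, `D - 1`)
together with `cos² φ + sin² φ = 1` eliminate those partial derivatives and leave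
`Hess f (cos φ, sin φ) = (D - 1) (D² F² + D F F'' - (D - 1) F'²)`,
so hyperbolicity gives the sign of the right-hand side.
-/

open MvPolynomial Real

/-- The Hessian polynomial `f_xx * f_yy - f_xy ^ 2` of a bivariate real polynomial. -/
noncomputable def Hess (f : MvPolynomial (Fin 2) ℝ) : MvPolynomial (Fin 2) ℝ :=
  pderiv 0 (pderiv 0 f) * pderiv 1 (pderiv 1 f) - (pderiv 1 (pderiv 0 f)) ^ 2

/-- A bivariate polynomial is hyperbolic if its Hessian is negative off the origin. -/
def Hyperbolic (f : MvPolynomial (Fin 2) ℝ) : Prop :=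
  ∀ x y : ℝ, ¬(x = 0 ∧ y = 0) → eval ![x, y] (Hess f) < 0

namespace MvPolynomial

variable {σ R : Type*} [CommSemiring R]

theorem pderiv_comm (i j : σ) (p : MvPolynomial σ R) :
    pderiv i (pderiv j p) = pderiv j (pderiv i p) := by
  classical
  induction p using MvPolynomial.induction_on with
  | C a => simp
  | add p q hp hq => simp only [map_add, hp, hq]
  | mul_X p k ih =>
    simp only [pderiv_mul, map_add, ih, pderiv_X, Pi.single_apply, apply_ite (pderiv _),
      pderiv_one, map_zero, ite_self, mul_zero, add_zero]
    ring

theorem IsHomogeneous.sum_mul_eval_pderiv [Fintype σ] {p : MvPolynomial σ R} {n : ℕ}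
    (h : p.IsHomogeneous n) (x : σ → R) :
    ∑ i, x i * eval x (pderiv i p) = n * eval x p := by
  simpa using congrArg (eval x) h.sum_X_mul_pderiv

theorem hasDerivAt_eval_comp {𝕜 : Type*} [NontriviallyNormedField 𝕜] [Fintype σ]
    (p : MvPolynomial σ 𝕜) {γ : 𝕜 → σ → 𝕜} {γ' : σ → 𝕜} {t : 𝕜}
    (hγ : ∀ i, HasDerivAt (fun s => γ s i) (γ' i) t) :
    HasDerivAt (fun s => eval (γ s) p) (∑ i, γ' i * eval (γ t) (pderiv i p)) t := by
  classical
  induction p using MvPolynomial.induction_on with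
  | C a => simpa using hasDerivAt_const t a
  | add p q hp hq =>
    simpa only [map_add, mul_add, Finset.sum_add_distrib] using hp.fun_add hq
  | mul_X p k ih =>
    simp only [map_mul, eval_X]
    refine (ih.fun_mul (hγ k)).congr_deriv ?_
    simp only [pderiv_mul, pderiv_X, map_add, map_mul, eval_X, Pi.single_apply,
      apply_ite (eval _), map_zero, mul_ite, mul_one, mul_zero, mul_add, Finset.sum_add_distrib,
      Finset.sum_ite_eq, Finset.mem_univ, if_true, Finset.sum_mul, mul_assoc]
    ring

end MvPolynomial

theorem hessian_identity_of_euler {R : Type*} [CommRing R] {D c s F Fx Fy Fxx Fxy Fyy : R}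
    (hcs : c ^ 2 + s ^ 2 = 1) (hF : c * Fx + s * Fy = D * F)
    (hFx : c * Fxx + s * Fxy = (D - 1) * Fx) (hFy : c * Fxy + s * Fyy = (D - 1) * Fy) :
    (D - 1) * (D ^ 2 * F ^ 2
      + D * F * (-c * Fx - s * Fy + s ^ 2 * Fxx - 2 * s * c * Fxy + c ^ 2 * Fyy)
      - (D - 1) * (-s * Fx + c * Fy) ^ 2) = Fxx * Fyy - Fxy ^ 2 := by
  linear_combination (-((D - 1) * D * F)) * hF
    + (s ^ 2 * Fxx - 2 * s * c * Fxy + c ^ 2 * Fyy) * (-(D - 1) * hF - c * hFx - s * hFy)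
    - ((D - 1) * (-s * Fx + c * Fy) + (-(c * s) * Fxx + (c ^ 2 - s ^ 2) * Fxy + c * s * Fyy))
      * (s * hFx - c * hFy)
    + ((c ^ 2 + s ^ 2 + 1) * (Fxx * Fyy - Fxy ^ 2)) * hcs

noncomputable def circleRestriction (p : MvPolynomial (Fin 2) ℝ) (t : ℝ) : ℝ :=
  eval ![cos t, sin t] p

theorem hasDerivAt_circleRestriction (p : MvPolynomial (Fin 2) ℝ) (t : ℝ) :
    HasDerivAt (circleRestriction p)
      (-sin t * circleRestriction (pderiv 0 p) t + cos t * circleRestriction (pderiv 1 p) t) t := by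
  have hγ : ∀ i, HasDerivAt (fun s => ![cos s, sin s] i) (![-sin t, cos t] i) t := by
    intro i
    fin_cases i
    · exact hasDerivAt_cos t
    · exact hasDerivAt_sin t
  have h := hasDerivAt_eval_comp p hγ
  simp only [Fin.sum_univ_two, Matrix.cons_val_zero, Matrix.cons_val_one] at h
  exact h

theorem deriv_circleRestriction (p : MvPolynomial (Fin 2) ℝ) :
    deriv (circleRestriction p) =
      fun t => -sin t * circleRestriction (pderiv 0 p) t + cos t * circleRestriction (pderiv 1 p) t :=
  funext fun t => (hasDerivAt_circleRestriction p t).deriv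

theorem deriv_deriv_circleRestriction (p : MvPolynomial (Fin 2) ℝ) (t : ℝ) :
    deriv (deriv (circleRestriction p)) t =
      -cos t * circleRestriction (pderiv 0 p) t - sin t * circleRestriction (pderiv 1 p) t
        + sin t ^ 2 * circleRestriction (pderiv 0 (pderiv 0 p)) t
        - 2 * sin t * cos t * circleRestriction (pderiv 1 (pderiv 0 p)) t
        + cos t ^ 2 * circleRestriction (pderiv 1 (pderiv 1 p)) t := by
  rw [deriv_circleRestriction]
  refine ((((hasDerivAt_sin t).neg.fun_mul (hasDerivAt_circleRestriction _ t)).fun_add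
    ((hasDerivAt_cos t).fun_mul (hasDerivAt_circleRestriction _ t))).deriv).trans ?_
  rw [pderiv_comm 0 1, Pi.neg_apply]
  ring

theorem eval_Hess_cos_sin {D : ℕ} (hD : 1 ≤ D) {f : MvPolynomial (Fin 2) ℝ}
    (hf : f.IsHomogeneous D) (t : ℝ) :
    eval ![cos t, sin t] (Hess f) =
      (D - 1) * (D ^ 2 * circleRestriction f t ^ 2
        + D * circleRestriction f t * deriv (deriv (circleRestriction f)) t
        - (D - 1) * deriv (circleRestriction f) t ^ 2) := by
  have euler {n : ℕ} {p : MvPolynomial (Fin 2) ℝ} (hp : p.IsHomogeneous n) :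
      cos t * circleRestriction (pderiv 0 p) t + sin t * circleRestriction (pderiv 1 p) t
        = n * circleRestriction p t := by
    simpa [circleRestriction, Fin.sum_univ_two] using hp.sum_mul_eval_pderiv ![cos t, sin t]
  have hD' : ((D - 1 : ℕ) : ℝ) = D - 1 := by push_cast [hD]; ring
  have hFx := euler (hf.pderiv (i := 0))
  have hFy := euler (hf.pderiv (i := 1))
  rw [hD'] at hFx hFy
  rw [pderiv_comm 0 1] at hFy
  rw [deriv_deriv_circleRestriction, deriv_circleRestriction,
    hessian_identity_of_euler (cos_sq_add_sin_sq t) (euler hf) hFx hFy,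
    Hess, map_sub, map_mul, map_pow]
  rfl

theorem hyperbolicity_inequality (D : ℕ) (hD : 2 ≤ D) (f : MvPolynomial (Fin 2) ℝ)
    (hf : f.IsHomogeneous D) (hyp : Hyperbolic f) (φ : ℝ) :
    (D : ℝ) ^ 2 * (eval ![Real.cos φ, Real.sin φ] f) ^ 2
      + (D : ℝ) * eval ![Real.cos φ, Real.sin φ] f
          * deriv (deriv (fun t => eval ![Real.cos t, Real.sin t] f)) φ
      - ((D : ℝ) - 1) * (deriv (fun t => eval ![Real.cos t, Real.sin t] f) φ) ^ 2 < 0 := by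
  have hD1 : 1 ≤ D := by omega
  have hcs : ¬(cos φ = 0 ∧ sin φ = 0) := fun ⟨hc, hs⟩ => by
    simpa [hc, hs] using cos_sq_add_sin_sq φ
  have hHess := hyp _ _ hcs
  rw [eval_Hess_cos_sin hD1 hf φ] at hHess
  exact neg_of_mul_neg_right hHess (sub_nonneg.2 (Nat.one_le_cast.2 hD1))
end

section
/- Let f be a hyperbolic homogeneous polynomial of degree D and F(φ) = f(cos φ, sin φ). Then every critical point of F is nondegenerate (F'(φ₀) = 0 implies F''(φ₀) ≠ 0), and F has no zeros of multiplicity ≥ 2. -/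
/-!
On the unit circle, Euler's identity for `f` and for its first partial derivatives expresses the
Hessian through the restriction `F(φ) = f(cos φ, sin φ)`:
`Hess f = (D - 1) (D² F² + D F F'' - (D - 1) F'²)`.
The Hessian is negative there by hyperbolicity, so `F' = F'' = 0` would give `(D - 1) D² F² < 0`,
and `F = F' = 0` would give `0 < 0`.
-/

open MvPolynomial Real

namespace MvPolynomial

section CommRing

variable {R σ : Type*} [CommRing R]

theorem pderiv_pderiv_comm (i j : σ) (φ : MvPolynomial σ R) :
    pderiv i (pderiv j φ) = pderiv j (pderiv i φ) := by
  have : ⁅pderiv i, pderiv j⁆ = (0 : Derivation R (MvPolynomial σ R) (MvPolynomial σ R)) :=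
    derivation_ext fun k => by
      classical
      rw [Derivation.commutator_apply]
      simp [pderiv_X, Pi.single_apply, apply_ite]
  have := congr($this φ)
  rwa [Derivation.commutator_apply, Derivation.zero_apply, sub_eq_zero] at this

theorem IsHomogeneous.sum_X_mul_pderiv_pderiv [Fintype σ] {n : ℕ} {φ : MvPolynomial σ R}
    (h : φ.IsHomogeneous n) (j : σ) :
    ∑ i, X i * pderiv i (pderiv j φ) + pderiv j φ = n • pderiv j φ := by
  classical
  simpa [pderiv_mul, pderiv_X, Pi.single_apply, Finset.sum_add_distrib, pderiv_pderiv_comm j,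
    add_comm] using congr(pderiv j $(h.sum_X_mul_pderiv))

end CommRing

theorem hasDerivAt_eval_of_hasDerivAt {𝕜 σ : Type*} [NontriviallyNormedField 𝕜]
    [Fintype σ] {x : 𝕜 → σ → 𝕜} {x' : σ → 𝕜} {t : 𝕜}
    (hx : ∀ i, HasDerivAt (fun s => x s i) (x' i) t) (p : MvPolynomial σ 𝕜) :
    HasDerivAt (fun s => eval (x s) p) (∑ i, x' i * eval (x t) (pderiv i p)) t := by
  classical
  induction p using MvPolynomial.induction_on with
  | C a => simpa using hasDerivAt_const t a
  | add p q hp hq =>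
    simpa only [map_add, eval_add, mul_add, Finset.sum_add_distrib] using hp.fun_add hq
  | mul_X p i hp =>
    refine ((hp.fun_mul (hx i)).congr_deriv ?_).congr_of_eventuallyEq (by simp)
    simp only [Finset.sum_mul, Derivation.leibniz, pderiv_X, Pi.single_apply, smul_eq_mul,
      mul_ite, mul_one, mul_zero, map_add, apply_ite (eval (x t)), map_zero, map_mul, eval_X,
      mul_comm (x t i), mul_add, Finset.sum_add_distrib, Finset.sum_ite_eq, Finset.mem_univ,
      ↓reduceIte, mul_assoc]
    ring

end MvPolynomial

theorem hessian_eq_of_euler {R : Type*} [CommRing R] {D x y F p q a b c : R}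
    (hxy : x ^ 2 + y ^ 2 = 1) (h0 : x * p + y * q = D * F)
    (h1 : x * a + y * b + p = D * p) (h2 : x * b + y * c + q = D * q) :
    a * c - b ^ 2 = (D - 1) * (D ^ 2 * F ^ 2
      + D * F * (-x * p - y * q + y ^ 2 * a - 2 * x * y * b + x ^ 2 * c)
      - (D - 1) * (-y * p + x * q) ^ 2) := by
  linear_combination
      ((y ^ 2 * a - 2 * x * y * b + x ^ 2 * c) * x
          + y * ((x ^ 2 * b + x * y * c - x * y * a - y ^ 2 * b)
            + (D - 1) * (x * q - y * p))) * h1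
        + ((y ^ 2 * a - 2 * x * y * b + x ^ 2 * c) * y
          - x * ((x ^ 2 * b + x * y * c - x * y * a - y ^ 2 * b)
            + (D - 1) * (x * q - y * p))) * h2
        + ((D - 1) * (y ^ 2 * a - 2 * x * y * b + x ^ 2 * c)
            + (D - 1) * D * F) * h0
        - (a * c - b ^ 2) * (x ^ 2 + y ^ 2 + 1) * hxy

theorem hasDerivAt_eval_cos_sin (p : MvPolynomial (Fin 2) ℝ) (t : ℝ) :
    HasDerivAt (fun t => eval ![cos t, sin t] p)
      (-sin t * eval ![cos t, sin t] (pderiv 0 p) + cos t * eval ![cos t, sin t] (pderiv 1 p))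
      t := by
  have hx : ∀ i, HasDerivAt (fun s => ![cos s, sin s] i) (![-sin t, cos t] i) t := by
    intro i
    fin_cases i
    · simpa using hasDerivAt_cos t
    · simpa using hasDerivAt_sin t
  simpa [Fin.sum_univ_two] using hasDerivAt_eval_of_hasDerivAt hx p

theorem deriv_deriv_eval_cos_sin (p : MvPolynomial (Fin 2) ℝ) (t : ℝ) :
    deriv (deriv fun t => eval ![cos t, sin t] p) t =
      -cos t * eval ![cos t, sin t] (pderiv 0 p) - sin t * eval ![cos t, sin t] (pderiv 1 p)
        + sin t ^ 2 * eval ![cos t, sin t] (pderiv 0 (pderiv 0 p))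
        - 2 * cos t * sin t * eval ![cos t, sin t] (pderiv 1 (pderiv 0 p))
        + cos t ^ 2 * eval ![cos t, sin t] (pderiv 1 (pderiv 1 p)) := by
  rw [funext fun s => (hasDerivAt_eval_cos_sin p s).deriv]
  refine (((hasDerivAt_sin t).neg.mul (hasDerivAt_eval_cos_sin (pderiv 0 p) t)).add
    ((hasDerivAt_cos t).mul (hasDerivAt_eval_cos_sin (pderiv 1 p) t))).deriv.trans ?_
  rw [pderiv_pderiv_comm 0 1, Pi.neg_apply]
  ring

theorem MvPolynomial.IsHomogeneous.eval_cos_sin_hess {D : ℕ} {f : MvPolynomial (Fin 2) ℝ}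
    (hf : f.IsHomogeneous D) (t : ℝ) :
    eval ![cos t, sin t] (Hess f) = (D - 1) * (D ^ 2 * eval ![cos t, sin t] f ^ 2
      + D * eval ![cos t, sin t] f * deriv (deriv fun t => eval ![cos t, sin t] f) t
      - (D - 1) * deriv (fun t => eval ![cos t, sin t] f) t ^ 2) := by
  have euler := congr(eval ![cos t, sin t] $(hf.sum_X_mul_pderiv))
  have euler₀ := congr(eval ![cos t, sin t] $(hf.sum_X_mul_pderiv_pderiv 0))
  have euler₁ := congr(eval ![cos t, sin t] $(hf.sum_X_mul_pderiv_pderiv 1))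
  simp only [Fin.sum_univ_two, pderiv_pderiv_comm (0 : Fin 2) 1, map_add, map_mul, map_natCast,
    eval_X, nsmul_eq_mul, Matrix.cons_val_zero, Matrix.cons_val_one] at euler euler₀ euler₁
  rw [deriv_deriv_eval_cos_sin, (hasDerivAt_eval_cos_sin f t).deriv, Hess, eval_sub, eval_mul,
    eval_pow]
  linear_combination hessian_eq_of_euler (cos_sq_add_sin_sq t) euler euler₀ euler₁

theorem nondegenerate_critical_points (D : ℕ) (f : MvPolynomial (Fin 2) ℝ)
    (hf : f.IsHomogeneous D) (hyp : Hyperbolic f) :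
    (∀ φ : ℝ, deriv (fun t => eval ![Real.cos t, Real.sin t] f) φ = 0 →
      deriv (deriv (fun t => eval ![Real.cos t, Real.sin t] f)) φ ≠ 0) ∧
    (∀ φ : ℝ, eval ![Real.cos φ, Real.sin φ] f = 0 →
      deriv (fun t => eval ![Real.cos t, Real.sin t] f) φ ≠ 0) := by
  have hess_neg (φ : ℝ) : eval ![cos φ, sin φ] (Hess f) < 0 :=
    hyp _ _ fun ⟨hc, hs⟩ => by simpa [hc, hs] using cos_sq_add_sin_sq φ
  constructor
  · intro φ h1 h2
    have hD : (0 : ℝ) ≤ ((D : ℝ) - 1) * (D : ℝ) ^ 2 := by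
      rcases D with _ | n
      · simp
      · push_cast
        rw [add_sub_cancel_right]
        positivity
    have := hess_neg φ
    rw [hf.eval_cos_sin_hess, h1, h2] at this
    nlinarith [sq_nonneg (eval ![cos φ, sin φ] f)]
  · intro φ h0 h1
    have := hess_neg φ
    rw [hf.eval_cos_sin_hess, h0, h1] at this
    simp at this
end
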